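/- Define for p in the open unit ball the ball center c(p) = p/(2√(1-‖p‖²)) and weight w(p) = ‖p‖²/(4(1-‖p‖²)) - 1/√(1-‖p‖²). Then for any two distinct points p, q in the open unit ball and any x ∈ ℝ^d, the power distances satisfy ‖c(p)-x‖² - w(p) = ‖c(q)-x‖² - w(q) if and only if ⟨x, q√(1-‖p‖²) - p√(1-‖q‖²)⟩ + √(1-‖q‖²) - √(1-‖p‖²) = 0, after multiplying by the positive factor; hence the Klein hyperbolic bisector of p,q coincides with the radical hyperplane of the associated weighted points. -/

import Mathlib

open Real
open scoped RealInnerProductSpace BigOperators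

noncomputable def arcosh (x : ℝ) : ℝ := Real.log (x + Real.sqrt (x ^ 2 - 1))

/-- Klein hyperbolic distance on the open unit ball. -/
noncomputable def kleinDist {d : ℕ} (p q : EuclideanSpace ℝ (Fin d)) : ℝ :=
  _root_.arcosh ((1 - ⟪p, q⟫) / Real.sqrt ((1 - ‖p‖ ^ 2) * (1 - ‖q‖ ^ 2)))

/-- Center of the ball associated to a Klein point. -/
noncomputable def kleinCenter {d : ℕ} (p : EuclideanSpace ℝ (Fin d)) :
    EuclideanSpace ℝ (Fin d) :=
  (2 * Real.sqrt (1 - ‖p‖ ^ 2))⁻¹ • p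

/-- Weight of the ball associated to a Klein point. -/
noncomputable def kleinWeight {d : ℕ} (p : EuclideanSpace ℝ (Fin d)) : ℝ :=
  ‖p‖ ^ 2 / (4 * (1 - ‖p‖ ^ 2)) - 1 / Real.sqrt (1 - ‖p‖ ^ 2)

/-!
Everything is governed by `f_p(x) = (1 - ⟪p, x⟫) / √(1 - ‖p‖²)`: the power distance of `x` to the
weighted point of `p` is `‖x‖² + f_p(x)`, and `cosh d_K(p, x) = f_p(x) / √(1 - ‖x‖²)`. Hence equal
power distances, equal Klein distances (`arcosh` is injective on `[1, ∞)`) and the linear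
equation `f_p(x) = f_q(x)` cleared of denominators all say the same thing.
-/

lemma arcosh_strictMonoOn : StrictMonoOn _root_.arcosh (Set.Ici 1) := by
  intro x hx y hy hxy
  rw [Set.mem_Ici] at hx hy
  have hsqrt : √(x ^ 2 - 1) ≤ √(y ^ 2 - 1) := Real.sqrt_le_sqrt (by nlinarith)
  exact Real.log_lt_log (by positivity) (by linarith)

lemma one_sub_norm_sq_pos {E : Type*} [SeminormedAddCommGroup E] {p : E} (hp : ‖p‖ < 1) :
    0 < 1 - ‖p‖ ^ 2 :=
  sub_pos.2 (pow_lt_one₀ (norm_nonneg p) hp two_ne_zero)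

section InnerProductSpace

variable {E : Type*} [NormedAddCommGroup E] [InnerProductSpace ℝ E]

def powerDist (c : E) (w : ℝ) (x : E) : ℝ := ‖c - x‖ ^ 2 - w

lemma powerDist_sub_powerDist (c c' : E) (w w' : ℝ) (x : E) :
    powerDist c w x - powerDist c' w' x =
      2 * ⟪x, c' - c⟫ + ‖c‖ ^ 2 - ‖c'‖ ^ 2 + w' - w := by
  simp only [powerDist, norm_sub_sq_real, inner_sub_right, real_inner_comm x]
  ring

lemma mul_one_sub_sq_norm_le_sq_one_sub_inner {p x : E} (hp : ‖p‖ ≤ 1) (hx : ‖x‖ ≤ 1) :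
    (1 - ‖p‖ ^ 2) * (1 - ‖x‖ ^ 2) ≤ (1 - ⟪p, x⟫) ^ 2 := by
  have hinner : ⟪p, x⟫ ≤ ‖p‖ * ‖x‖ := real_inner_le_norm p x
  have hprod : ‖p‖ * ‖x‖ ≤ 1 := mul_le_one₀ hp (norm_nonneg x) hx
  calc (1 - ‖p‖ ^ 2) * (1 - ‖x‖ ^ 2) = (1 - ‖p‖ * ‖x‖) ^ 2 - (‖p‖ - ‖x‖) ^ 2 := by ring
    _ ≤ (1 - ‖p‖ * ‖x‖) ^ 2 := sub_le_self _ (sq_nonneg _)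
    _ ≤ (1 - ⟪p, x⟫) ^ 2 := by gcongr

lemma one_le_one_sub_inner_div_sqrt {p x : E} (hp : ‖p‖ < 1) (hx : ‖x‖ < 1) :
    1 ≤ (1 - ⟪p, x⟫) / √((1 - ‖p‖ ^ 2) * (1 - ‖x‖ ^ 2)) := by
  have hinner : ⟪p, x⟫ ≤ 1 :=
    (real_inner_le_norm p x).trans (mul_le_one₀ hp.le (norm_nonneg x) hx.le)
  rw [one_le_div (Real.sqrt_pos.2 (mul_pos (one_sub_norm_sq_pos hp) (one_sub_norm_sq_pos hx))),
    Real.sqrt_le_left (sub_nonneg.2 hinner)]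
  exact mul_one_sub_sq_norm_le_sq_one_sub_inner hp.le hx.le

lemma one_sub_inner_div_eq_iff {a b : ℝ} (ha : a ≠ 0) (hb : b ≠ 0) (p q x : E) :
    (1 - ⟪p, x⟫) / a = (1 - ⟪q, x⟫) / b ↔ ⟪x, a • q - b • p⟫ + b - a = 0 := by
  rw [div_eq_div_iff ha hb, inner_sub_right, real_inner_smul_right, real_inner_smul_right,
    real_inner_comm x p, real_inner_comm x q]
  constructor <;> intro h <;> linarith

end InnerProductSpace

section Klein

variable {d : ℕ}

lemma powerDist_kleinCenter {p : EuclideanSpace ℝ (Fin d)} (hp : ‖p‖ < 1)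
    (x : EuclideanSpace ℝ (Fin d)) :
    powerDist (kleinCenter p) (kleinWeight p) x = ‖x‖ ^ 2 + (1 - ⟪p, x⟫) / √(1 - ‖p‖ ^ 2) := by
  have hp2 := one_sub_norm_sq_pos hp
  rw [powerDist, kleinCenter, kleinWeight, norm_sub_sq_real, norm_smul, real_inner_smul_left,
    norm_inv]
  set a := √(1 - ‖p‖ ^ 2)
  have ha : 0 < a := Real.sqrt_pos.mpr hp2
  have ha2 : a ^ 2 = 1 - ‖p‖ ^ 2 := Real.sq_sqrt hp2.le
  rw [Real.norm_of_nonneg (by positivity), ← ha2]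
  field_simp
  ring

lemma powerDist_kleinCenter_eq_iff {p q : EuclideanSpace ℝ (Fin d)} (hp : ‖p‖ < 1)
    (hq : ‖q‖ < 1) (x : EuclideanSpace ℝ (Fin d)) :
    powerDist (kleinCenter p) (kleinWeight p) x = powerDist (kleinCenter q) (kleinWeight q) x ↔
      (1 - ⟪p, x⟫) / √(1 - ‖p‖ ^ 2) = (1 - ⟪q, x⟫) / √(1 - ‖q‖ ^ 2) := by
  rw [powerDist_kleinCenter hp, powerDist_kleinCenter hq, add_right_inj]

lemma kleinDist_eq_kleinDist_iff {p q x : EuclideanSpace ℝ (Fin d)} (hp : ‖p‖ < 1)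
    (hq : ‖q‖ < 1) (hx : ‖x‖ < 1) :
    kleinDist p x = kleinDist q x ↔
      (1 - ⟪p, x⟫) / √(1 - ‖p‖ ^ 2) = (1 - ⟪q, x⟫) / √(1 - ‖q‖ ^ 2) := by
  have hx2 : 0 < √(1 - ‖x‖ ^ 2) := Real.sqrt_pos.mpr (one_sub_norm_sq_pos hx)
  rw [kleinDist, kleinDist, arcosh_strictMonoOn.injOn.eq_iff
      (one_le_one_sub_inner_div_sqrt hp hx) (one_le_one_sub_inner_div_sqrt hq hx),
    Real.sqrt_mul (one_sub_norm_sq_pos hp).le, Real.sqrt_mul (one_sub_norm_sq_pos hq).le,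
    ← div_div, ← div_div, div_left_inj' hx2.ne']

end Klein

theorem klein_bisector_eq_radical_hyperplane_general {d : ℕ}
    (p q : EuclideanSpace ℝ (Fin d)) (hp : ‖p‖ < 1) (hq : ‖q‖ < 1) :
    (∀ x : EuclideanSpace ℝ (Fin d),
      (‖kleinCenter p - x‖ ^ 2 - kleinWeight p = ‖kleinCenter q - x‖ ^ 2 - kleinWeight q ↔
        ⟪x, Real.sqrt (1 - ‖p‖ ^ 2) • q - Real.sqrt (1 - ‖q‖ ^ 2) • p⟫ +
          Real.sqrt (1 - ‖q‖ ^ 2) - Real.sqrt (1 - ‖p‖ ^ 2) = 0)) ∧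
    {x : EuclideanSpace ℝ (Fin d) | ‖x‖ < 1 ∧ kleinDist p x = kleinDist q x} =
      {x : EuclideanSpace ℝ (Fin d) | ‖x‖ < 1 ∧
        2 * ⟪x, kleinCenter q - kleinCenter p⟫ + ‖kleinCenter p‖ ^ 2 - ‖kleinCenter q‖ ^ 2 +
          kleinWeight q - kleinWeight p = 0} := by
  have hsqrt_ne {v : EuclideanSpace ℝ (Fin d)} (hv : ‖v‖ < 1) : √(1 - ‖v‖ ^ 2) ≠ 0 :=
    (Real.sqrt_pos.mpr (one_sub_norm_sq_pos hv)).ne'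
  refine ⟨fun x => (powerDist_kleinCenter_eq_iff hp hq x).trans
    (one_sub_inner_div_eq_iff (hsqrt_ne hp) (hsqrt_ne hq) p q x), ?_⟩
  ext x
  refine and_congr_right fun hx => ?_
  rw [kleinDist_eq_kleinDist_iff hp hq hx, ← powerDist_kleinCenter_eq_iff hp hq x,
    ← powerDist_sub_powerDist, sub_eq_zero]

/-- The Klein hyperbolic bisector coincides with the radical hyperplane of the
associated weighted points. -/
theorem klein_bisector_eq_radical_hyperplane {d : ℕ}
    (p q : EuclideanSpace ℝ (Fin d)) (hp : ‖p‖ < 1) (hq : ‖q‖ < 1) (hpq : p ≠ q) :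
    (∀ x : EuclideanSpace ℝ (Fin d),
      (‖kleinCenter p - x‖ ^ 2 - kleinWeight p = ‖kleinCenter q - x‖ ^ 2 - kleinWeight q ↔
        ⟪x, Real.sqrt (1 - ‖p‖ ^ 2) • q - Real.sqrt (1 - ‖q‖ ^ 2) • p⟫ +
          Real.sqrt (1 - ‖q‖ ^ 2) - Real.sqrt (1 - ‖p‖ ^ 2) = 0)) ∧
    {x : EuclideanSpace ℝ (Fin d) | ‖x‖ < 1 ∧ kleinDist p x = kleinDist q x} =
      {x : EuclideanSpace ℝ (Fin d) | ‖x‖ < 1 ∧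
        2 * ⟪x, kleinCenter q - kleinCenter p⟫ + ‖kleinCenter p‖ ^ 2 - ‖kleinCenter q‖ ^ 2 +
          kleinWeight q - kleinWeight p = 0} :=
  klein_bisector_eq_radical_hyperplane_general p q hp hq
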